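/- arXiv:2508.21387 — 2 statements merged into one kernel-verified Lean document; each statement's English description precedes it below -/
import Mathlib

section
/- The semigroup B_Z^{F²} is an inverse semigroup in which the inverse of (i, j, F) is (j, i, F). -/
/-- Elements of `B_Z^{F²}`: `(i, j, q)` encodes `(i, j, [q))` with `q ∈ {0,1}`. -/
abbrev BZF : Type := ℤ × ℤ × Fin 2

/-- Convert an integer `v ∈ {0,1}` (value of `max`-computations on ray indices)
back to the index of the ray `[v)`. -/
def famOfInt (v : ℤ) : Fin 2 := if v ≤ 0 then 0 else 1

/-- The semigroup operation on `B_Z^{F²}`: the third coordinates are combined via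
shift `n + [a) = [max (a+n) 0)` and intersection `[a) ∩ [b) = [max a b)`. -/
def bzMul (x y : BZF) : BZF :=
  if x.2.1 ≤ y.1 then
    (x.1 - x.2.1 + y.1, y.2.1,
      famOfInt (max (max (((x.2.2 : ℕ) : ℤ) + x.2.1 - y.1) 0) ((y.2.2 : ℕ) : ℤ)))
  else
    (x.1, x.2.1 - y.1 + y.2.1,
      famOfInt (max ((x.2.2 : ℕ) : ℤ) (max (((y.2.2 : ℕ) : ℤ) + y.1 - x.2.1) 0)))

/-- Endomorphism predicate for maps of `B_Z^{F²}`. -/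
def IsHom (e : BZF → BZF) : Prop := ∀ x y : BZF, e (bzMul x y) = bzMul (e x) (e y)

/-- The distinguished idempotent `(0,0,[0))`. -/
def c0 : BZF := (0, 0, 0)

/-!
Read `(i, j, [a))` as the partial translation `n ↦ n - i + j` of `ℤ` with domain `i + [a)`,
remembering `i` and `j`. In the coordinates `i`, `j` and `d = i + a` (the least point of the
domain), multiplication is the product of the integer bicyclic semigroup on `(i, j)`, while
`d = max d₁ (d₂ - j₁ + i₁)` is the least point of the domain of the composite translation.
Associativity and the inverse laws thereby become identities between `max`-expressions in
integers, which are linear arithmetic.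
-/

def bzDom (x : BZF) : ℤ := x.1 + ((x.2.2 : ℕ) : ℤ)

lemma bzEq_iff {x y : BZF} : x = y ↔ x.1 = y.1 ∧ x.2.1 = y.2.1 ∧ bzDom x = bzDom y := by
  obtain ⟨i, j, a⟩ := x
  obtain ⟨k, l, b⟩ := y
  simp only [bzDom, Prod.mk.injEq, Fin.ext_iff]
  omega

lemma famOfInt_val {v : ℤ} (h₀ : 0 ≤ v) (h₁ : v ≤ 1) : ((famOfInt v : ℕ) : ℤ) = v := by
  unfold famOfInt; split_ifs <;> simp only [Fin.isValue, Fin.val_zero, Fin.val_one] <;> omega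

lemma bzMul_fst (x y : BZF) : (bzMul x y).1 = x.1 - x.2.1 + max x.2.1 y.1 := by
  unfold bzMul; split_ifs <;> simp only <;> omega

lemma bzMul_snd_fst (x y : BZF) : (bzMul x y).2.1 = y.2.1 - y.1 + max x.2.1 y.1 := by
  unfold bzMul; split_ifs <;> simp only <;> omega

lemma bzDom_bzMul (x y : BZF) : bzDom (bzMul x y) = max (bzDom x) (bzDom y - x.2.1 + x.1) := by
  have ha := x.2.2.isLt
  have hb := y.2.2.isLt
  unfold bzDom bzMul
  split_ifs <;> simp only <;> rw [famOfInt_val] <;> omega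

lemma bzMul_assoc (x y z : BZF) : bzMul (bzMul x y) z = bzMul x (bzMul y z) := by
  simp only [bzEq_iff, bzMul_fst, bzMul_snd_fst, bzDom_bzMul]
  omega

lemma bzMul_bzMul_swap (i j : ℤ) (a : Fin 2) :
    bzMul (bzMul (i, j, a) (j, i, a)) (i, j, a) = (i, j, a) := by
  simp only [bzEq_iff, bzMul_fst, bzMul_snd_fst, bzDom_bzMul]
  simp only [bzDom]
  omega

lemma eq_swap_of_bzMul_bzMul {x y : BZF} (hx : bzMul (bzMul x y) x = x)
    (hy : bzMul (bzMul y x) y = y) : y = (x.2.1, x.1, x.2.2) := by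
  have hd : bzDom (x.2.1, x.1, x.2.2) = bzDom x - x.1 + x.2.1 := by simp only [bzDom]; omega
  rw [bzEq_iff] at hx hy ⊢
  simp only [bzMul_fst, bzMul_snd_fst, bzDom_bzMul, hd] at hx hy ⊢
  omega

/-- `B_Z^{F²}` is an inverse semigroup, the inverse of `(i,j,F)` being `(j,i,F)`. -/
theorem bzf_inverse_semigroup :
    (∀ x y z : BZF, bzMul (bzMul x y) z = bzMul x (bzMul y z)) ∧
    (∀ x : BZF,
      (bzMul (bzMul x (x.2.1, x.1, x.2.2)) x = x ∧
       bzMul (bzMul (x.2.1, x.1, x.2.2) x) (x.2.1, x.1, x.2.2) = (x.2.1, x.1, x.2.2)) ∧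
      (∀ y : BZF, bzMul (bzMul x y) x = x → bzMul (bzMul y x) y = y →
        y = (x.2.1, x.1, x.2.2))) :=
  ⟨bzMul_assoc, fun ⟨i, j, a⟩ =>
    ⟨⟨bzMul_bzMul_swap i j a, bzMul_bzMul_swap j i a⟩, fun _ => eq_swap_of_bzMul_bzMul⟩⟩
end

section
/- B_Z^{F²} is the increasing union over n ∈ ω of the subsemigroups B_Z^{F²}(−n,−n,0) = (−n,−n,[0)) · B_Z^{F²} · (−n,−n,[0)); moreover, for m, n ∈ ω, B_Z^{F²}(−n,−n,0) ⊆ B_Z^{F²}(−m,−m,0) if and only if m ≥ n. -/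
/-- The subsemigroup `B_Z^{F²}(k,k,0) = (k,k,[0)) ⬝ B_Z^{F²} ⬝ (k,k,[0))`. -/
def Sk (k : ℤ) : Set BZF :=
  {z | ∃ x : BZF, z = bzMul (bzMul ((k, k, (0 : Fin 2)) : BZF) x) ((k, k, (0 : Fin 2)) : BZF)}

/-!
On the first two coordinates `bzMul` is the multiplication of the bicyclic extension
`ℤ × ℤ`, so left factors can only raise the first coordinate and right factors only the
second. Conversely `(k,k,[0))` acts as a two-sided identity on every triple with both
coordinates `≥ k`, so `Sk k` is exactly the quadrant `[k, ∞) × [k, ∞) × {[0), [1)}`.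
-/

lemma famOfInt_val_s17 (q : Fin 2) : famOfInt (q : ℕ) = q := by
  fin_cases q <;> rfl

lemma fst_le_fst_bzMul (x y : BZF) : x.1 ≤ (bzMul x y).1 := by
  unfold bzMul
  split_ifs <;> dsimp only <;> omega

lemma snd_fst_le_snd_fst_bzMul (x y : BZF) : y.2.1 ≤ (bzMul x y).2.1 := by
  unfold bzMul
  split_ifs <;> dsimp only <;> omega

lemma diag_bzMul_eq_self {k : ℤ} {z : BZF} (hz : k ≤ z.1) :
    bzMul (k, k, 0) z = z := by
  obtain ⟨i, j, q⟩ := z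
  simp only [bzMul, if_pos hz, Fin.val_zero, Nat.cast_zero, zero_add, sub_self]
  rw [max_eq_right (by omega : k - i ≤ 0), max_eq_right (by omega), famOfInt_val_s17]

lemma bzMul_diag_eq_self {k : ℤ} {z : BZF} (hz : k ≤ z.2.1) :
    bzMul z (k, k, 0) = z := by
  obtain ⟨i, j, q⟩ := z
  dsimp only at hz
  unfold bzMul
  split_ifs with h
  · obtain rfl : j = k := le_antisymm h hz
    simp [famOfInt_val_s17]
  · simp only [Fin.val_zero, Nat.cast_zero, zero_add, sub_add_cancel]
    rw [max_eq_right (by omega : k - j ≤ 0), max_eq_left (by omega), famOfInt_val_s17]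

lemma mem_Sk_iff {k : ℤ} {z : BZF} : z ∈ Sk k ↔ k ≤ z.1 ∧ k ≤ z.2.1 := by
  constructor
  · rintro ⟨x, rfl⟩
    exact ⟨(fst_le_fst_bzMul _ x).trans (fst_le_fst_bzMul _ _),
      snd_fst_le_snd_fst_bzMul _ (k, k, 0)⟩
  · rintro ⟨h1, h2⟩
    exact ⟨z, by rw [diag_bzMul_eq_self h1, bzMul_diag_eq_self h2]⟩

lemma Sk_subset_Sk_iff {k l : ℤ} : Sk k ⊆ Sk l ↔ l ≤ k := by
  constructor
  · intro h
    exact (mem_Sk_iff.1 (h (mem_Sk_iff.2 ⟨le_rfl, le_rfl⟩ : ((k, k, 0) : BZF) ∈ Sk k))).1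
  · intro hlk z hz
    rw [mem_Sk_iff] at hz ⊢
    exact ⟨hlk.trans hz.1, hlk.trans hz.2⟩

/-- `B_Z^{F²}` is the increasing union of the subsemigroups `B_Z^{F²}(-n,-n,0)`,
`n ∈ ω`, and `B_Z^{F²}(-n,-n,0) ⊆ B_Z^{F²}(-m,-m,0)` iff `m ≥ n`. -/
theorem union_Sk_neg :
    (∀ z : BZF, ∃ n : ℕ, z ∈ Sk (-(n : ℤ))) ∧
    (∀ m n : ℕ, Sk (-(n : ℤ)) ⊆ Sk (-(m : ℤ)) ↔ n ≤ m) := by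
  refine ⟨fun z => ⟨z.1.natAbs + z.2.1.natAbs, mem_Sk_iff.2 ⟨by omega, by omega⟩⟩,
    fun m n => ?_⟩
  rw [Sk_subset_Sk_iff, neg_le_neg_iff, Nat.cast_le]
end
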